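/- For a Gaussian mixture posterior map: fix J ≥ 2, strictly positive proportions p_ℓ and Gaussian densities φ(·|μ_ℓ, σ_ℓ²) for ℓ ≠ ν. If two parameter values (p_ν, μ_ν, σ_ν²) and (p_ν', μ_ν', σ_ν'²) (with p_ν, p_ν' > 0, σ_ν², σ_ν'² > 0) give rise to the same function y ↦ p_ν φ(y|μ_ν, σ_ν²) / (p_ν φ(y|μ_ν,σ_ν²) + Σ_{ℓ≠ν} p_ℓ φ(y|μ_ℓ,σ_ℓ²)) on ℝ, then p_ν = p_ν', μ_ν = μ_ν', and σ_ν² = σ_ν'². -/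

import Mathlib

/-!
Since the background sum `S(y)` is positive, `a ↦ a / (a + S(y))` is injective, so the two
weighted densities `pν φ(y | μν, sν)` agree at every `y`. Their logarithms are then the same
quadratic polynomial in `y`; comparing the coefficients of `y²` and `y` gives `sν = sν'` and
`μν = μν'`, after which the weights agree as well.
-/

open Finset Real

noncomputable def gaussDens (μ s y : ℝ) : ℝ :=
  (Real.sqrt (2 * Real.pi * s))⁻¹ * Real.exp (-(y - μ) ^ 2 / (2 * s))

lemma eq_of_div_add_eq_div_add {K : Type*} [Field K] {a a' S : K} (hS : S ≠ 0)
    (ha : a + S ≠ 0) (ha' : a' + S ≠ 0) (h : a / (a + S) = a' / (a' + S)) : a = a' := by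
  rw [div_eq_div_iff ha ha'] at h
  exact mul_right_cancel₀ hS (by linear_combination h)

lemma quadratic_coeffs_eq_of_forall_eq {K : Type*} [Field K] [LinearOrder K]
    [IsStrictOrderedRing K] {a b c a' b' c' : K}
    (h : ∀ y : K, a * y ^ 2 + b * y + c = a' * y ^ 2 + b' * y + c') :
    a = a' ∧ b = b' ∧ c = c' := by
  have h₀ := h 0
  have h₁ := h 1
  have h₂ := h (-1)
  refine ⟨?_, ?_, ?_⟩ <;> linarith

lemma gaussDens_pos (μ : ℝ) {s : ℝ} (hs : 0 < s) (y : ℝ) : 0 < gaussDens μ s y := by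
  unfold gaussDens
  have : 0 < Real.sqrt (2 * Real.pi * s) := Real.sqrt_pos.mpr (by positivity)
  positivity

lemma log_mul_gaussDens {p : ℝ} (μ : ℝ) {s : ℝ} (hp : 0 < p) (hs : 0 < s) (y : ℝ) :
    Real.log (p * gaussDens μ s y) =
      -(2 * s)⁻¹ * y ^ 2 + μ / s * y +
        (Real.log p - Real.log (Real.sqrt (2 * Real.pi * s)) - μ ^ 2 / (2 * s)) := by
  have : 0 < Real.sqrt (2 * Real.pi * s) := Real.sqrt_pos.mpr (by positivity)
  unfold gaussDens
  rw [Real.log_mul hp.ne' (by positivity), Real.log_mul (by positivity) (Real.exp_ne_zero _),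
    Real.log_inv, Real.log_exp]
  field_simp
  ring

lemma params_eq_of_forall_mul_gaussDens_eq {p p' μ μ' s s' : ℝ}
    (hp : 0 < p) (hp' : 0 < p') (hs : 0 < s) (hs' : 0 < s')
    (h : ∀ y, p * gaussDens μ s y = p' * gaussDens μ' s' y) :
    p = p' ∧ μ = μ' ∧ s = s' := by
  obtain ⟨hquad, hlin, -⟩ := quadratic_coeffs_eq_of_forall_eq fun y =>
    (log_mul_gaussDens μ hp hs y).symm.trans <| (congrArg Real.log (h y)).trans <|
      log_mul_gaussDens μ' hp' hs' y
  have hss : s = s' := by simpa using hquad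
  subst hss
  have hμμ : μ = μ' := by simpa [hs.ne'] using hlin
  subst hμμ
  exact ⟨mul_right_cancel₀ (gaussDens_pos μ hs 0).ne' (h 0), rfl, rfl⟩

theorem stmt_18 (m : ℕ) (hm : 1 ≤ m)
    (p : Fin m → ℝ) (μ : Fin m → ℝ) (s : Fin m → ℝ)
    (hp : ∀ ℓ, 0 < p ℓ) (hs : ∀ ℓ, 0 < s ℓ)
    (pν pν' μν μν' sν sν' : ℝ)
    (hpν : 0 < pν) (hpν' : 0 < pν') (hsν : 0 < sν) (hsν' : 0 < sν')
    (heq : ∀ y : ℝ,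
      pν * gaussDens μν sν y /
        (pν * gaussDens μν sν y + ∑ ℓ : Fin m, p ℓ * gaussDens (μ ℓ) (s ℓ) y)
      = pν' * gaussDens μν' sν' y /
        (pν' * gaussDens μν' sν' y + ∑ ℓ : Fin m, p ℓ * gaussDens (μ ℓ) (s ℓ) y)) :
    pν = pν' ∧ μν = μν' ∧ sν = sν' := by
  have hS : ∀ y, 0 < ∑ ℓ : Fin m, p ℓ * gaussDens (μ ℓ) (s ℓ) y := fun y =>
    Finset.sum_pos (fun ℓ _ => mul_pos (hp ℓ) (gaussDens_pos _ (hs ℓ) y))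
      (Finset.univ_nonempty_iff.mpr ⟨⟨0, hm⟩⟩)
  refine params_eq_of_forall_mul_gaussDens_eq hpν hpν' hsν hsν' fun y => ?_
  have ha := mul_pos hpν (gaussDens_pos μν hsν y)
  have ha' := mul_pos hpν' (gaussDens_pos μν' hsν' y)
  exact eq_of_div_add_eq_div_add (hS y).ne' (by linarith [hS y]) (by linarith [hS y]) (heq y)
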